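/- arXiv:math/0402292 — 3 statements merged into one kernel-verified Lean document; each statement's English description precedes it below -/
import Mathlib

section
/- Given a linear operator Δ on a commutative unital algebra A, define the n-ary brackets {a₁,…,aₙ} := [···[[Δ, L_{a₁}], L_{a₂}],···, L_{aₙ}](1). Then the (k+1)-ary bracket measures the failure of the Leibniz rule for the k-ary bracket: {a₁,…,a_{k−1}, bc} − {a₁,…,a_{k−1}, b}c − (±) b{a₁,…,a_{k−1}, c} = ± {a₁,…,a_{k−1}, b, c} (with appropriate Koszul signs). -/
variable (k : Type) [Field k] (A : Type) [CommRing A] [Algebra k A]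

/-- The operator of multiplication by `a`. -/
def lmul (a : A) : Module.End k A := LinearMap.mulLeft k a

/-- The commutator of operators. -/
def cbr (X Y : Module.End k A) : Module.End k A := X * Y - Y * X

/-- Iterated commutators `[⋯[[Δ, L_{a₁}], L_{a₂}]⋯, L_{aₙ}]` along a list of elements. -/
def cfold (Δ : Module.End k A) (l : List A) : Module.End k A :=
  l.foldl (fun X a => cbr k A X (lmul k A a)) Δ

/-- The `n`-ary Koszul bracket `{a₁,…,aₙ} := [⋯[[Δ, L_{a₁}], L_{a₂}]⋯, L_{aₙ}](1)`. -/
def kbr (Δ : Module.End k A) (l : List A) : A := cfold k A Δ l 1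

/-- `Δ` is a differential operator of order `≤ n` in the Grothendieck sense. -/
def OrdLE (Δ : Module.End k A) (n : ℕ) : Prop :=
  ∀ l : List A, l.length = n + 1 → cfold k A Δ l = 0

/-- The `(k+1)`-ary Koszul bracket measures the failure of the Leibniz
rule for the `k`-ary bracket:
`{a₁,…,a_{k−1}, bc} − {a₁,…,a_{k−1}, b}c − b{a₁,…,a_{k−1}, c} = {a₁,…,a_{k−1}, b, c}`. -/
theorem stmt2 (Δ : Module.End k A) (l : List A) (b c : A) :
    kbr k A Δ (l ++ [b * c]) - kbr k A Δ (l ++ [b]) * c - b * kbr k A Δ (l ++ [c]) =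
      kbr k A Δ (l ++ [b, c]) := by
  have key : ∀ x : A, cfold k A Δ (l ++ [x]) = cbr k A (cfold k A Δ l) (lmul k A x) := by
    intro x; simp [cfold, List.foldl_append]
  have key2 : cfold k A Δ (l ++ [b, c]) =
      cbr k A (cbr k A (cfold k A Δ l) (lmul k A b)) (lmul k A c) := by
    simp [cfold, List.foldl_append]
  set X := cfold k A Δ l
  simp only [kbr, key, key2, cbr, lmul, LinearMap.sub_apply, Module.End.mul_apply,
    LinearMap.mulLeft_apply, mul_one]
  ring
end

section
/- A linear operator Δ on a commutative unital algebra A is a differential operator of order ≤ N (in the Grothendieck sense of iterated commutators) if and only if all the Koszul brackets {a₁,…,aₙ} := [···[Δ, L_{a₁}],···, L_{aₙ}](1) with n > N arguments vanish. -/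
variable (k : Type) [Field k] (A : Type) [CommRing A] [Algebra k A]

/-!
Since `[X, L_b](1) = X b - b · X 1`, an iterated commutator `X = [⋯[Δ, L_{a₁}]⋯, L_{aₙ}]`
satisfies `X b = {a₁,…,aₙ,b} + b · {a₁,…,aₙ}`, so `X` vanishes once all brackets of arity
`n` and `n + 1` do. Conversely, once `X` vanishes so do all longer iterated commutators,
hence all longer brackets.
-/

lemma cfold_append (Δ : Module.End k A) (l₁ l₂ : List A) :
    cfold k A Δ (l₁ ++ l₂) = cfold k A (cfold k A Δ l₁) l₂ :=
  List.foldl_append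

lemma cfold_zero (l : List A) : cfold k A 0 l = 0 := by
  induction l with
  | nil => rfl
  | cons a l ih =>
    have hcbr : cbr k A 0 (lmul k A a) = 0 := by simp [cbr]
    simpa [cfold, hcbr] using ih

lemma cfold_apply (Δ : Module.End k A) (l : List A) (b : A) :
    cfold k A Δ l b = kbr k A Δ (l ++ [b]) + b * kbr k A Δ l := by
  simp [kbr, cfold, cbr, lmul]

lemma kbr_eq_zero_of_ordLE {Δ : Module.End k A} {N : ℕ} (h : OrdLE k A Δ N) {l : List A}
    (hl : N < l.length) : kbr k A Δ l = 0 := by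
  have hlen : (l.take (N + 1)).length = N + 1 := by rw [List.length_take]; omega
  rw [kbr, ← List.take_append_drop (N + 1) l, cfold_append, h _ hlen, cfold_zero,
    LinearMap.zero_apply]

lemma ordLE_of_kbr_eq_zero {Δ : Module.End k A} {N : ℕ}
    (h : ∀ l : List A, N < l.length → kbr k A Δ l = 0) : OrdLE k A Δ N := by
  intro l hl
  ext b
  rw [cfold_apply, h _ (by rw [List.length_append, hl]; omega), h _ (by omega)]
  simp

/-- `Δ` is a differential operator of order `≤ N` (iterated-commutator
sense) iff all its Koszul brackets with more than `N` arguments vanish. -/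
theorem stmt3 (Δ : Module.End k A) (N : ℕ) :
    OrdLE k A Δ N ↔ ∀ l : List A, N < l.length → kbr k A Δ l = 0 :=
  ⟨fun h _ hl => kbr_eq_zero_of_ordLE k A h hl, ordLE_of_kbr_eq_zero k A⟩
end

section
/- (Higher derived brackets, abstract form) Let 𝔤 be a Lie superalgebra with a projector P: 𝔤 → 𝔤 (P² = P) such that ker P and im P are subalgebras and im P is abelian. For odd Δ ∈ 𝔤, define the n-th derived bracket on V = im P by {a₁,…,aₙ}_Δ := P[···[[Δ,a₁],a₂],···,aₙ]. Then the n-th Jacobiator of the derived brackets of Δ equals the n-th derived bracket of Δ²: Jⁿ_Δ(a₁,…,aₙ) = {a₁,…,aₙ}_{Δ²}, where Δ² = ½[Δ,Δ]. -/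
open scoped Classical

/-- The Koszul sign `(-1)^{pq}` for parities `p q : ZMod 2`. -/
def ksign (p q : ZMod 2) : ℤ := if p = 1 ∧ q = 1 then -1 else 1

/-- A Lie superalgebra over `k`: a `ZMod 2`-graded module with a bilinear bracket
that is graded-antisymmetric and satisfies the graded Jacobi identity
(on homogeneous elements). -/
structure LieSuper (k G : Type) [Field k] [AddCommGroup G] [Module k G] where
  gr : ZMod 2 → Submodule k G
  br : G →ₗ[k] G →ₗ[k] G
  br_gr : ∀ i j x y, x ∈ gr i → y ∈ gr j → br x y ∈ gr (i + j)
  skew : ∀ i j x y, x ∈ gr i → y ∈ gr j → br x y = -(ksign i j • br y x)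
  jacobi : ∀ i j x y z, x ∈ gr i → y ∈ gr j →
    br x (br y z) = br (br x y) z + ksign i j • br y (br x z)

variable {k G : Type} [Field k] [AddCommGroup G] [Module k G]

/-- The `n`-th derived bracket `{a₁,…,aₙ}_D := P[⋯[[D,a₁],a₂],⋯,aₙ]`. -/
def dbr (L : LieSuper k G) (P : G →ₗ[k] G) (D : G) (l : List G) : G :=
  P (l.foldl (fun x a => L.br x a) D)

/-- `σ` is a `(j, n-j)`-shuffle: strictly monotone on the first `j` positions
and on the last `n - j` positions. -/
def IsShuffle {n : ℕ} (j : ℕ) (σ : Equiv.Perm (Fin n)) : Prop :=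
  (∀ s t : Fin n, s < t → (t : ℕ) < j → σ s < σ t) ∧
  (∀ s t : Fin n, s < t → j ≤ (s : ℕ) → σ s < σ t)

/-- The Koszul sign of the permutation `σ` of homogeneous arguments of parities `p`:
the product of `(-1)^{p_i p_j}` over all inversions of `σ`. -/
noncomputable def koszulSign {n : ℕ} (p : Fin n → ZMod 2) (σ : Equiv.Perm (Fin n)) : ℤ :=
  ∏ q ∈ Finset.univ.filter (fun q : Fin n × Fin n => q.1 < q.2 ∧ σ q.2 < σ q.1),
    ksign (p (σ q.1)) (p (σ q.2))

/-- The `n`-th Jacobiator of the derived brackets of `D`: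
`Jⁿ(a₁,…,aₙ) = Σ_{j+l=n} Σ_{(j,l)-shuffles σ} ± {{a_{σ(1)},…,a_{σ(j)}}_D, a_{σ(j+1)},…,a_{σ(n)}}_D`
with Koszul signs. -/
noncomputable def jacobiator (L : LieSuper k G) (P : G →ₗ[k] G) (D : G) {n : ℕ}
    (p : Fin n → ZMod 2) (a : Fin n → G) : G :=
  ∑ j ∈ Finset.range (n + 1),
    ∑ σ ∈ Finset.univ.filter (fun σ : Equiv.Perm (Fin n) => IsShuffle j σ),
      koszulSign p σ •
        dbr L P D
          (dbr L P D (((List.finRange n).take j).map fun i => a (σ i)) ::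
            ((List.finRange n).drop j).map fun i => a (σ i))

/-!
Write `F(z; b₁,…,bₘ) = [⋯[[z,b₁],b₂],⋯,bₘ]`. Bracketing on the right by a homogeneous element is
a graded derivation, so `F([Δ,Δ]; a)` is a Koszul-signed sum, over the splittings of `a` into
complementary subsequences `a'` and `a''`, of `[F(Δ; a'), F(Δ; a'')]`. Because `ker P` is a
subalgebra and `im P` is abelian, `P[x,y] = P[Px,y] + P[x,Py]`; by graded skew-symmetry and the
symmetry `a' ↔ a''` of the sum, both halves equal `Σ ± P[F(Δ; a''), P F(Δ; a')]`, which absorbs the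
`½` of `Δ²`. This is also the Jacobiator: the arguments lie in the abelian subalgebra `im P`, so
`P F(Δ; a')` can be pulled out of `F([Δ, P F(Δ; a')]; a'')`. Finally, `(j, n-j)`-shuffles are the
same as splittings, with matching Koszul signs.
-/

theorem ksign_comm (p q : ZMod 2) : ksign p q = ksign q p := by revert p q; decide

@[simp] theorem ksign_zero_left (q : ZMod 2) : ksign 0 q = 1 := by revert q; decide

@[simp] theorem ksign_zero_right (p : ZMod 2) : ksign p 0 = 1 := by revert p; decide

theorem ksign_mul_self (p q : ZMod 2) : ksign p q * ksign p q = 1 := by revert p q; decide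

theorem ksign_add_left (p q r : ZMod 2) : ksign (p + q) r = ksign p r * ksign q r := by
  revert p q r; decide

theorem ksign_add_right (p q r : ZMod 2) : ksign p (q + r) = ksign p q * ksign p r := by
  revert p q r; decide

theorem ksign_smul_ksign_smul {M : Type*} [AddCommGroup M] (p q : ZMod 2) (x : M) :
    ksign p q • ksign p q • x = x := by
  rw [smul_smul, ksign_mul_self, one_smul]

section Splittings

variable {α : Type*}

def parity (l : List (α × ZMod 2)) : ZMod 2 := (l.map Prod.snd).sum

@[simp] theorem parity_nil : parity ([] : List (α × ZMod 2)) = 0 := rfl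

@[simp] theorem parity_cons (a : α × ZMod 2) (l : List (α × ZMod 2)) :
    parity (a :: l) = a.2 + parity l := List.sum_cons

theorem parity_append (l₁ l₂ : List (α × ZMod 2)) :
    parity (l₁ ++ l₂) = parity l₁ + parity l₂ := by
  simp [parity]

/-- The splittings `(l₁, l₂)` of `l` into complementary sublists, each with the Koszul sign of
the reordering `l ↦ l₁ ++ l₂`. -/
def signedSplits : List (α × ZMod 2) → List (ℤ × List (α × ZMod 2) × List (α × ZMod 2))
  | [] => [(1, [], [])]
  | a :: l =>
      (signedSplits l).map (fun t => (t.1, a :: t.2.1, t.2.2)) ++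
      (signedSplits l).map (fun t => (ksign (parity t.2.1) a.2 * t.1, t.2.1, a :: t.2.2))

theorem mem_of_mem_signedSplits {l : List (α × ZMod 2)} {t} (ht : t ∈ signedSplits l) :
    (∀ e ∈ t.2.1, e ∈ l) ∧ (∀ e ∈ t.2.2, e ∈ l) := by
  induction l generalizing t with
  | nil =>
    obtain rfl : t = (1, [], []) := List.mem_singleton.mp ht
    simp
  | cons a l ih =>
    simp only [signedSplits, List.mem_append, List.mem_map] at ht
    rcases ht with ⟨u, hu, rfl⟩ | ⟨u, hu, rfl⟩ <;>
    · obtain ⟨h₁, h₂⟩ := ih hu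
      simp only [List.mem_cons]
      exact ⟨by grind, by grind⟩

def swapSplit (t : ℤ × List (α × ZMod 2) × List (α × ZMod 2)) :
    ℤ × List (α × ZMod 2) × List (α × ZMod 2) :=
  (t.1 * ksign (parity t.2.1) (parity t.2.2), t.2.2, t.2.1)

theorem swapSplit_swapSplit (t : ℤ × List (α × ZMod 2) × List (α × ZMod 2)) :
    swapSplit (swapSplit t) = t := by
  obtain ⟨s, x, y⟩ := t
  simp only [swapSplit, ksign_comm (parity y) (parity x), mul_assoc,
    ksign_mul_self, mul_one]

theorem perm_map_swapSplit_signedSplits (l : List (α × ZMod 2)) :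
    ((signedSplits l).map swapSplit).Perm (signedSplits l) := by
  induction l with
  | nil => simp [signedSplits, swapSplit]
  | cons a l ih =>
    simp only [signedSplits, List.map_append, List.map_map]
    refine List.perm_append_comm.trans (List.Perm.append ?_ ?_)
    · have := ih.map (fun t => (t.1, a :: t.2.1, t.2.2))
      rw [List.map_map] at this
      refine List.Perm.trans (List.Perm.of_eq (List.map_congr_left fun t _ => ?_)) this
      simp only [Function.comp, swapSplit, parity_cons, ksign_add_right, Prod.mk.injEq, and_true]
      linear_combination (t.1 * ksign (parity t.2.1) (parity t.2.2)) *
        ksign_mul_self (parity t.2.1) a.2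
    · have := ih.map (fun t => (ksign (parity t.2.1) a.2 * t.1, t.2.1, a :: t.2.2))
      rw [List.map_map] at this
      refine List.Perm.trans (List.Perm.of_eq (List.map_congr_left fun t _ => ?_)) this
      simp only [Function.comp, swapSplit, parity_cons, ksign_add_left, Prod.mk.injEq, and_true,
        ksign_comm a.2 (parity t.2.2)]
      ring

theorem sum_map_signedSplits_swapSplit {M : Type*} [AddCommMonoid M] (l : List (α × ZMod 2))
    (g : ℤ × List (α × ZMod 2) × List (α × ZMod 2) → M) :
    ((signedSplits l).map (g ∘ swapSplit)).sum = ((signedSplits l).map g).sum := by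
  rw [← List.map_map]
  exact ((perm_map_swapSplit_signedSplits l).map g).sum_eq

end Splittings

namespace LieSuper

variable (L : LieSuper k G)

def iterBr (z : G) (l : List G) : G := l.foldl (fun x a => L.br x a) z

@[simp] theorem iterBr_nil (z : G) : L.iterBr z [] = z := rfl

@[simp] theorem iterBr_cons (z a : G) (l : List G) :
    L.iterBr z (a :: l) = L.iterBr (L.br z a) l := rfl

theorem iterBr_add (z w : G) (l : List G) :
    L.iterBr (z + w) l = L.iterBr z l + L.iterBr w l := by
  induction l generalizing z w with
  | nil => rfl
  | cons a l ih => simp only [iterBr_cons, map_add, LinearMap.add_apply, ih]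

theorem iterBr_smul (c : k) (z : G) (l : List G) :
    L.iterBr (c • z) l = c • L.iterBr z l := by
  induction l generalizing z with
  | nil => rfl
  | cons a l ih => simp only [iterBr_cons, map_smul, LinearMap.smul_apply, ih]

theorem iterBr_zsmul (c : ℤ) (z : G) (l : List G) :
    L.iterBr (c • z) l = c • L.iterBr z l := by
  induction l generalizing z with
  | nil => rfl
  | cons a l ih => simp only [iterBr_cons, map_zsmul, LinearMap.smul_apply, ih]

theorem iterBr_mem_gr {z : G} {i : ZMod 2} (hz : z ∈ L.gr i) {l : List (G × ZMod 2)}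
    (hl : ∀ e ∈ l, e.1 ∈ L.gr e.2) : L.iterBr z (l.map Prod.fst) ∈ L.gr (i + parity l) := by
  induction l generalizing z i with
  | nil => simpa using hz
  | cons a l ih =>
    rw [parity_cons, ← add_assoc]
    exact ih (L.br_gr i a.2 z a.1 hz (hl a List.mem_cons_self))
      fun e he => hl e (List.mem_cons_of_mem _ he)

theorem br_br_right {u v c : G} {pu pv d : ZMod 2} (hu : u ∈ L.gr pu) (hv : v ∈ L.gr pv)
    (hc : c ∈ L.gr d) :
    L.br (L.br u v) c = ksign d pv • L.br (L.br u c) v + L.br u (L.br v c) := by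
  have e₁ : ∀ pu pv d : ZMod 2, ksign (pu + pv) d * ksign d pu = ksign d pv := by decide
  have e₂ : ∀ pu pv d : ZMod 2, ksign (pu + pv) d * (ksign d pu * ksign d pv) = 1 := by decide
  have jac := L.jacobi d pu c u v hc hu
  rw [L.skew d pu c u hc hu, L.skew d pv c v hc hv] at jac
  rw [L.skew (pu + pv) d _ c (L.br_gr pu pv u v hu hv) hc, jac]
  simp only [map_neg, map_zsmul, LinearMap.neg_apply, LinearMap.smul_apply, smul_neg,
    neg_neg, smul_add, smul_smul, neg_add, e₁, e₂, one_smul]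

theorem iterBr_br {u v : G} {pu pv : ZMod 2} (hu : u ∈ L.gr pu) (hv : v ∈ L.gr pv)
    {l : List (G × ZMod 2)} (hl : ∀ e ∈ l, e.1 ∈ L.gr e.2) :
    L.iterBr (L.br u v) (l.map Prod.fst) =
      ((signedSplits l).map fun t => (t.1 * ksign (parity t.2.1) pv) •
        L.br (L.iterBr u (t.2.1.map Prod.fst)) (L.iterBr v (t.2.2.map Prod.fst))).sum := by
  induction l generalizing u v pu pv with
  | nil => simp [signedSplits]
  | cons a l ih =>
    have hl' : ∀ e ∈ l, e.1 ∈ L.gr e.2 := fun e he => hl e (List.mem_cons_of_mem _ he)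
    have ha := hl a List.mem_cons_self
    rw [List.map_cons, iterBr_cons, L.br_br_right hu hv ha, iterBr_add, iterBr_zsmul,
      ih (L.br_gr _ _ _ _ hu ha) hv hl', ih hu (L.br_gr _ _ _ _ hv ha) hl']
    simp only [signedSplits, List.map_append, List.sum_append, List.map_map, List.smul_sum]
    congr 1 <;> refine congrArg List.sum (List.map_congr_left fun t _ => ?_) <;>
      simp only [Function.comp, List.map_cons, iterBr_cons, parity_cons, smul_smul,
        ksign_add_left, ksign_add_right] <;>
      ring_nf

theorem iterBr_br_of_abelian {P : G →ₗ[k] G} (habel : ∀ x y, L.br (P x) (P y) = 0)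
    {w b : G} {pw e : ZMod 2} (hw : w ∈ L.gr pw) (hb : b ∈ L.gr e) (hbP : P b = b)
    {l : List (G × ZMod 2)} (hl : ∀ x ∈ l, x.1 ∈ L.gr x.2 ∧ P x.1 = x.1) :
    L.iterBr (L.br w b) (l.map Prod.fst) =
      ksign e (parity l) • L.br (L.iterBr w (l.map Prod.fst)) b := by
  induction l generalizing w pw with
  | nil => simp
  | cons a l ih =>
    obtain ⟨ha, haP⟩ := hl a List.mem_cons_self
    have hab : L.br (L.br w a.1) b = ksign e a.2 • L.br (L.br w b) a.1 := by
      rw [L.br_br_right hw ha hb, ← haP, ← hbP, habel, map_zero, add_zero, haP]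
    rw [List.map_cons, iterBr_cons, iterBr_cons,
      ← ksign_smul_ksign_smul e a.2 (L.br (L.br w b) a.1), ← hab, iterBr_zsmul,
      ih (L.br_gr _ _ _ _ hw ha) fun x hx => hl x (List.mem_cons_of_mem _ hx),
      smul_smul, parity_cons, ksign_add_right]

theorem proj_br {P : G →ₗ[k] G} (hP : ∀ x, P (P x) = P x)
    (hker : ∀ x y, P x = 0 → P y = 0 → P (L.br x y) = 0)
    (habel : ∀ x y, L.br (P x) (P y) = 0) (x y : G) :
    P (L.br x y) = P (L.br (P x) y) + P (L.br x (P y)) := by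
  have hcompl : P (L.br (x - P x) (y - P y)) = 0 :=
    hker _ _ (by rw [map_sub, hP, sub_self]) (by rw [map_sub, hP, sub_self])
  simp only [map_sub, LinearMap.sub_apply, habel, sub_zero] at hcompl
  exact sub_eq_zero.mp (by rw [← hcompl]; abel)

/-- The Jacobiator of the derived brackets of `D`, as a sum over the signed splittings of `l`. -/
def splitJacobiator (P : G →ₗ[k] G) (D : G) (l : List (G × ZMod 2)) : G :=
  ((signedSplits l).map fun t =>
    t.1 • P (L.iterBr (L.br D (P (L.iterBr D (t.2.1.map Prod.fst)))) (t.2.2.map Prod.fst))).sum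

def splitBracket (P : G →ₗ[k] G) (D : G) (t : ℤ × List (G × ZMod 2) × List (G × ZMod 2)) :
    G :=
  P (L.br (L.iterBr D (t.2.2.map Prod.fst)) (P (L.iterBr D (t.2.1.map Prod.fst))))

section DerivedBrackets

variable {P : G →ₗ[k] G} {D : G} {l : List (G × ZMod 2)}

theorem iterBr_mem_gr_of_mem_signedSplits (hD : D ∈ L.gr 1) (hl : ∀ e ∈ l, e.1 ∈ L.gr e.2)
    {t} (ht : t ∈ signedSplits l) :
    L.iterBr D (t.2.1.map Prod.fst) ∈ L.gr (1 + parity t.2.1) ∧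
      L.iterBr D (t.2.2.map Prod.fst) ∈ L.gr (1 + parity t.2.2) :=
  ⟨L.iterBr_mem_gr hD fun e he => hl e ((mem_of_mem_signedSplits ht).1 e he),
    L.iterBr_mem_gr hD fun e he => hl e ((mem_of_mem_signedSplits ht).2 e he)⟩

theorem splitJacobiator_eq_sum (hP : ∀ x, P (P x) = P x)
    (hPgr : ∀ (i : ZMod 2) (x : G), x ∈ L.gr i → P x ∈ L.gr i)
    (habel : ∀ x y, L.br (P x) (P y) = 0) (hD : D ∈ L.gr 1)
    (hl : ∀ e ∈ l, e.1 ∈ L.gr e.2 ∧ P e.1 = e.1) :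
    L.splitJacobiator P D l = ((signedSplits l).map fun t =>
      (t.1 * ksign (1 + parity t.2.1) (parity t.2.2)) • L.splitBracket P D t).sum := by
  refine congrArg List.sum (List.map_congr_left fun t ht => ?_)
  have hX := (L.iterBr_mem_gr_of_mem_signedSplits hD (fun e he => (hl e he).1) ht).1
  rw [L.iterBr_br_of_abelian habel hD (hPgr _ _ hX) (hP _)
    fun e he => hl e ((mem_of_mem_signedSplits ht).2 e he), map_zsmul, smul_smul, splitBracket]

theorem proj_iterBr_br_self (hP : ∀ x, P (P x) = P x)
    (hPgr : ∀ (i : ZMod 2) (x : G), x ∈ L.gr i → P x ∈ L.gr i)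
    (hker : ∀ x y, P x = 0 → P y = 0 → P (L.br x y) = 0)
    (habel : ∀ x y, L.br (P x) (P y) = 0) (hD : D ∈ L.gr 1)
    (hl : ∀ e ∈ l, e.1 ∈ L.gr e.2) :
    P (L.iterBr (L.br D D) (l.map Prod.fst)) = (2 : ℤ) • ((signedSplits l).map fun t =>
      (t.1 * ksign (1 + parity t.2.1) (parity t.2.2)) • L.splitBracket P D t).sum := by
  have hterm : ∀ t ∈ signedSplits l,
      P ((t.1 * ksign (parity t.2.1) 1) •
        L.br (L.iterBr D (t.2.1.map Prod.fst)) (L.iterBr D (t.2.2.map Prod.fst))) =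
      (-(t.1 * ksign (parity t.2.1) 1 * ksign (1 + parity t.2.1) (1 + parity t.2.2))) •
          L.splitBracket P D t +
        (t.1 * ksign (parity t.2.1) 1) • L.splitBracket P D (swapSplit t) := by
    intro t ht
    obtain ⟨hX, hY⟩ := L.iterBr_mem_gr_of_mem_signedSplits hD hl ht
    rw [map_zsmul, L.proj_br hP hker habel, L.skew _ _ _ _ (hPgr _ _ hX) hY, map_neg, map_zsmul,
      smul_add, smul_neg, smul_smul, neg_smul]
    rfl
  have hsign : ∀ p q : ZMod 2, -(ksign p 1 * ksign (1 + p) (1 + q)) + ksign p q * ksign q 1 =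
      2 * ksign (1 + p) q := by decide
  rw [L.iterBr_br hD hD hl, map_list_sum, List.map_map, Function.comp_def,
    List.map_congr_left hterm,
    List.sum_map_add, ← sum_map_signedSplits_swapSplit l fun t =>
      (t.1 * ksign (parity t.2.1) 1) • L.splitBracket P D (swapSplit t),
    ← List.sum_map_add, List.smul_sum, List.map_map]
  refine congrArg List.sum (List.map_congr_left fun t _ => ?_)
  simp only [Function.comp, swapSplit_swapSplit, smul_smul, ← add_smul]
  congr 1
  simp only [swapSplit]
  linear_combination t.1 * hsign (parity t.2.1) (parity t.2.2)

theorem splitJacobiator_eq [CharZero k] (hP : ∀ x, P (P x) = P x)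
    (hPgr : ∀ (i : ZMod 2) (x : G), x ∈ L.gr i → P x ∈ L.gr i)
    (hker : ∀ x y, P x = 0 → P y = 0 → P (L.br x y) = 0)
    (habel : ∀ x y, L.br (P x) (P y) = 0) (hD : D ∈ L.gr 1)
    (hl : ∀ e ∈ l, e.1 ∈ L.gr e.2 ∧ P e.1 = e.1) :
    L.splitJacobiator P D l = P (L.iterBr ((1 / 2 : k) • L.br D D) (l.map Prod.fst)) := by
  rw [iterBr_smul, map_smul, L.proj_iterBr_br_self hP hPgr hker habel hD fun e he => (hl e he).1,
    L.splitJacobiator_eq_sum hP hPgr habel hD hl, ← Int.cast_smul_eq_zsmul k, smul_smul]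
  norm_num

end DerivedBrackets

end LieSuper

section Selections

variable {α : Type*} {n : ℕ}

/-- The Koszul sign of moving the entries selected by `c` in front of the others. -/
def selectionSign (p : Fin n → ZMod 2) (c : Fin n → Bool) : ℤ :=
  ∏ q ∈ Finset.univ.filter
      (fun q : Fin n × Fin n => c q.1 = true ∧ c q.2 = false ∧ q.2 < q.1),
    ksign (p q.1) (p q.2)

def select (a : Fin n → α) (p : Fin n → ZMod 2) (c : Fin n → Bool) : List (α × ZMod 2) :=
  ((List.finRange n).filter c).map fun i => (a i, p i)

theorem select_cons (a : Fin (n + 1) → α) (p : Fin (n + 1) → ZMod 2) (b : Bool)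
    (c : Fin n → Bool) :
    select a p (Fin.cons b c) =
      (if b then [(a 0, p 0)] else []) ++ select (Fin.tail a) (Fin.tail p) c := by
  cases b <;> simp [select, List.finRange_succ, List.filter_map, Function.comp_def, Fin.tail]

theorem map_fst_select (a : Fin n → α) (p : Fin n → ZMod 2) (c : Fin n → Bool) :
    (select a p c).map Prod.fst = ((List.finRange n).filter c).map a := by
  simp [select, Function.comp_def]

theorem ksign_parity_select (a : Fin n → α) (p : Fin n → ZMod 2) (c : Fin n → Bool)
    (d : ZMod 2) :
    ksign (parity (select a p c)) d = ∏ u, if c u then ksign (p u) d else 1 := by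
  induction n with
  | zero => simp [select]
  | succ n ih =>
    obtain ⟨b, c, rfl⟩ : ∃ b c', c = Fin.cons b c' :=
      ⟨c 0, Fin.tail c, (Fin.cons_self_tail c).symm⟩
    rw [select_cons, parity_append, ksign_add_left, ih, Fin.prod_univ_succ]
    cases b <;> simp [Fin.tail]

theorem selectionSign_cons (p : Fin (n + 1) → ZMod 2) (b : Bool) (c : Fin n → Bool) :
    selectionSign p (Fin.cons b c) =
      (∏ u, if c u = true ∧ b = false then ksign (Fin.tail p u) (p 0) else 1) *
        selectionSign (Fin.tail p) c := by
  simp only [selectionSign, Finset.prod_filter, Fintype.prod_prod_type, Fin.prod_univ_succ,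
    Fin.cons_zero, Fin.cons_succ, Fin.not_lt_zero, Fin.succ_pos, Fin.succ_lt_succ_iff,
    and_false, if_false, Finset.prod_const_one, one_mul, and_true, ← Finset.prod_mul_distrib,
    Fin.tail]

theorem sum_selections_eq_sum_signedSplits {M : Type*} [AddCommGroup M] (a : Fin n → α)
    (p : Fin n → ZMod 2) (T : List (α × ZMod 2) → List (α × ZMod 2) → M) :
    ∑ c : Fin n → Bool, selectionSign p c • T (select a p c) (select a p (not ∘ c)) =
      ((signedSplits (List.ofFn fun i => (a i, p i))).map fun t => t.1 • T t.2.1 t.2.2).sum := by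
  induction n generalizing T with
  | zero => simp [selectionSign, select, signedSplits]
  | succ n ih =>
    rw [← (Fin.consEquiv fun _ => Bool).sum_comp, Fintype.sum_prod_type, Fintype.sum_bool,
      List.ofFn_succ, signedSplits, List.map_append, List.sum_append, List.map_map, List.map_map]
    congr 1 <;>
      simp only [Fin.consEquiv, Equiv.coe_fn_mk, selectionSign_cons, select_cons,
        Fin.comp_cons] <;>
      simp only [Bool.not_true, Bool.not_false, Bool.true_eq_false, Bool.false_eq_true, if_true,
        if_false, and_false, and_true, List.nil_append, List.singleton_append,
        Finset.prod_const_one, one_mul, Function.comp_def]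
    · exact ih (Fin.tail a) (Fin.tail p) fun x y => T ((a 0, p 0) :: x) y
    · have h := ih (Fin.tail a) (Fin.tail p)
        fun x y => ksign (parity x) (p 0) • T x ((a 0, p 0) :: y)
      simp only [smul_smul, mul_comm, ← ksign_parity_select (Fin.tail a)] at h ⊢
      exact h

end Selections

section Shuffles

variable {n : ℕ}

theorem mem_take_finRange {j : ℕ} {q : Fin n} :
    q ∈ (List.finRange n).take j ↔ (q : ℕ) < j := by
  rw [List.mem_take_iff_getElem]
  constructor
  · rintro ⟨i, hi, rfl⟩
    simp only [List.getElem_finRange, Fin.val_cast]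
    omega
  · exact fun h => ⟨q, by simp; omega, by simp⟩

theorem mem_drop_finRange {j : ℕ} {q : Fin n} :
    q ∈ (List.finRange n).drop j ↔ j ≤ (q : ℕ) := by
  rw [List.mem_drop_iff_getElem]
  constructor
  · rintro ⟨i, hi, rfl⟩
    simp
  · exact fun h => ⟨q - j, by simp; omega, by ext; simp; omega⟩

theorem eq_filter_finRange_of_pairwise {l : List (Fin n)} {q : Fin n → Bool}
    (hl : l.Pairwise (· < ·)) (hq : ∀ v, v ∈ l ↔ q v) : l = (List.finRange n).filter q :=
  hl.eq_of_mem_iff ((List.pairwise_lt_finRange n).filter q) fun v => by simp [hq]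

/-- The positions `σ 0, …, σ (j-1)`, whose arguments enter the inner bracket. -/
def shuffleSelection (j : ℕ) (σ : Equiv.Perm (Fin n)) (v : Fin n) : Bool :=
  decide ((σ.symm v : ℕ) < j)

theorem map_take_of_isShuffle {j : ℕ} {σ : Equiv.Perm (Fin n)} (hσ : IsShuffle j σ) :
    ((List.finRange n).take j).map σ = (List.finRange n).filter (shuffleSelection j σ) := by
  refine eq_filter_finRange_of_pairwise ?_ fun v => ?_
  · exact List.pairwise_map.mpr <|
      ((List.pairwise_lt_finRange n).sublist (List.take_sublist _ _)).imp_of_mem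
        fun _ ht hst => hσ.1 _ _ hst (mem_take_finRange.mp ht)
  · simp only [List.mem_map, mem_take_finRange, shuffleSelection, decide_eq_true_eq]
    exact ⟨by rintro ⟨q, hq, rfl⟩; simpa, fun h => ⟨σ.symm v, h, by simp⟩⟩

theorem map_drop_of_isShuffle {j : ℕ} {σ : Equiv.Perm (Fin n)} (hσ : IsShuffle j σ) :
    ((List.finRange n).drop j).map σ =
      (List.finRange n).filter (not ∘ shuffleSelection j σ) := by
  refine eq_filter_finRange_of_pairwise ?_ fun v => ?_
  · exact List.pairwise_map.mpr <|
      ((List.pairwise_lt_finRange n).sublist (List.drop_sublist _ _)).imp_of_mem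
        fun hs _ hst => hσ.2 _ _ hst (mem_drop_finRange.mp hs)
  · simp only [List.mem_map, mem_drop_finRange, Function.comp, shuffleSelection,
      Bool.not_eq_true', decide_eq_false_iff_not, not_lt]
    exact ⟨by rintro ⟨q, hq, rfl⟩; simpa, fun h => ⟨σ.symm v, h, by simp⟩⟩

/-- The inversions of a shuffle are exactly the pairs (first block, second block) that it
reverses. -/
theorem koszulSign_eq_selectionSign {j : ℕ} {σ : Equiv.Perm (Fin n)} (hσ : IsShuffle j σ)
    (p : Fin n → ZMod 2) : koszulSign p σ = selectionSign p (shuffleSelection j σ) := by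
  refine Finset.prod_nbij' (fun q => (σ q.1, σ q.2)) (fun q => (σ.symm q.1, σ.symm q.2))
    ?_ ?_ (fun q _ => by simp) (fun q _ => by simp) (fun q _ => rfl)
  · rintro ⟨s, t⟩ hq
    simp only [Finset.mem_filter, Finset.mem_univ, true_and] at hq ⊢
    obtain ⟨hst, hts⟩ := hq
    have hs : (s : ℕ) < j := by
      by_contra! h
      exact (hσ.2 s t hst h).asymm hts
    have ht : ¬ (t : ℕ) < j := fun h => (hσ.1 s t hst h).asymm hts
    simp [shuffleSelection, hs, ht, hts]
  · rintro ⟨u, v⟩ hq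
    simp only [Finset.mem_filter, Finset.mem_univ, true_and, shuffleSelection,
      decide_eq_true_eq, decide_eq_false_iff_not, not_lt] at hq ⊢
    obtain ⟨hu, hv, hvu⟩ := hq
    exact ⟨Fin.lt_def.mpr (by omega), by simpa using hvu⟩

def selectionCount (c : Fin n → Bool) : ℕ := ((List.finRange n).filter c).length

theorem selectionCount_le (c : Fin n → Bool) : selectionCount c ≤ n :=
  (List.length_filter_le c _).trans_eq (List.length_finRange)

def selectionList (c : Fin n → Bool) : List (Fin n) :=
  (List.finRange n).filter c ++ (List.finRange n).filter (not ∘ c)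

theorem length_selectionList (c : Fin n → Bool) : (selectionList c).length = n :=
  (List.filter_append_perm c _).length_eq.trans List.length_finRange

/-- The shuffle that sends the first `selectionCount c` arguments to the positions selected
by `c`. -/
noncomputable def selectionPerm (c : Fin n → Bool) : Equiv.Perm (Fin n) :=
  Equiv.ofBijective (fun q => (selectionList c)[q.cast (length_selectionList c).symm]) <|
    Finite.injective_iff_bijective.mp fun q₁ q₂ h => Fin.ext <| by
      have hnodup := (List.filter_append_perm c _).nodup_iff.mpr (List.nodup_finRange n)
      simpa using hnodup.getElem_inj_iff.mp h

theorem map_finRange_selectionPerm (c : Fin n → Bool) :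
    (List.finRange n).map (selectionPerm c) = selectionList c :=
  List.ext_getElem (by simp [length_selectionList]) fun i _ _ => by simp [selectionPerm]

theorem isShuffle_selectionPerm (c : Fin n → Bool) :
    IsShuffle (selectionCount c) (selectionPerm c) := by
  have hsorted : ∀ q : Fin n → Bool, ((List.finRange n).filter q).Pairwise (· < ·) :=
    fun q => (List.pairwise_lt_finRange n).filter q
  have hlen : ((List.finRange n).filter c ++ (List.finRange n).filter (not ∘ c)).length = n :=
    length_selectionList c
  have hget : ∀ s : Fin n, selectionPerm c s =
      ((List.finRange n).filter c ++ (List.finRange n).filter (not ∘ c))[(s : ℕ)]'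
        (s.isLt.trans_eq hlen.symm) :=
    fun s => rfl
  constructor
  · intro s t hst ht
    rw [hget, hget, List.getElem_append_left (ht.trans' hst), List.getElem_append_left ht]
    exact List.pairwise_iff_getElem.mp (hsorted c) _ _ _ _ hst
  · intro s t hst hs
    rw [hget, hget, List.getElem_append_right hs, List.getElem_append_right (hs.trans hst.le)]
    exact List.pairwise_iff_getElem.mp (hsorted _) _ _ _ _ (Nat.sub_lt_sub_right hs hst)

theorem selectionCount_shuffleSelection {j : ℕ} {σ : Equiv.Perm (Fin n)}
    (hσ : IsShuffle j σ) (hj : j ≤ n) : selectionCount (shuffleSelection j σ) = j := by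
  simpa [selectionCount, hj] using (congrArg List.length (map_take_of_isShuffle hσ)).symm

theorem selectionPerm_shuffleSelection {j : ℕ} {σ : Equiv.Perm (Fin n)}
    (hσ : IsShuffle j σ) : selectionPerm (shuffleSelection j σ) = σ := by
  have h : (List.finRange n).map (selectionPerm (shuffleSelection j σ)) =
      (List.finRange n).map σ := by
    rw [map_finRange_selectionPerm, selectionList, ← map_take_of_isShuffle hσ,
      ← map_drop_of_isShuffle hσ, ← List.map_append, List.take_append_drop]
  exact Equiv.ext fun q => List.map_inj_left.mp h q (List.mem_finRange q)

theorem shuffleSelection_selectionPerm (c : Fin n → Bool) :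
    shuffleSelection (selectionCount c) (selectionPerm c) = c := by
  have h := map_take_of_isShuffle (isShuffle_selectionPerm c)
  rw [List.map_take, map_finRange_selectionPerm, selectionList,
    List.take_left' (i := selectionCount c) rfl] at h
  funext v
  simpa using (congrArg (v ∈ ·) h).to_iff.symm

end Shuffles

theorem LieSuper.jacobiator_eq_splitJacobiator (L : LieSuper k G) (P : G →ₗ[k] G) (D : G)
    {n : ℕ} (p : Fin n → ZMod 2) (a : Fin n → G) :
    jacobiator L P D p a = L.splitJacobiator P D (List.ofFn fun i => (a i, p i)) := by
  rw [splitJacobiator, ← sum_selections_eq_sum_signedSplits a p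
    fun x y => P (L.iterBr (L.br D (P (L.iterBr D (x.map Prod.fst)))) (y.map Prod.fst)),
    jacobiator, Finset.sum_sigma']
  refine Finset.sum_nbij' (fun x => shuffleSelection x.1 x.2)
    (fun c => ⟨selectionCount c, selectionPerm c⟩) (fun _ _ => Finset.mem_univ _) ?_ ?_
    (fun c _ => shuffleSelection_selectionPerm c) ?_
  · intro c _
    simpa [Nat.lt_succ_iff] using ⟨selectionCount_le c, isShuffle_selectionPerm c⟩
  · rintro ⟨j, σ⟩ hx
    simp only [Finset.mem_sigma, Finset.mem_range, Finset.mem_filter, Finset.mem_univ, true_and,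
      Nat.lt_succ_iff] at hx
    exact Sigma.ext (selectionCount_shuffleSelection hx.2 hx.1)
      (heq_of_eq (selectionPerm_shuffleSelection hx.2))
  · rintro ⟨j, σ⟩ hx
    simp only [Finset.mem_sigma, Finset.mem_filter, Finset.mem_univ, true_and] at hx
    rw [koszulSign_eq_selectionSign hx.2, map_fst_select, map_fst_select,
      ← map_take_of_isShuffle hx.2, ← map_drop_of_isShuffle hx.2, List.map_map, List.map_map]
    rfl

/-- Higher derived brackets, abstract form: for a Lie superalgebra `𝔤`
with a projector `P` whose image is an abelian subalgebra and whose kernel is a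
subalgebra, and an odd `Δ ∈ 𝔤`, the `n`-th Jacobiator of the derived brackets of `Δ`
equals the `n`-th derived bracket of `Δ² = ½[Δ,Δ]`. -/
theorem stmt10 [CharZero k] (L : LieSuper k G) (P : G →ₗ[k] G)
    (hP : ∀ x, P (P x) = P x)
    (hPgr : ∀ (i : ZMod 2) (x : G), x ∈ L.gr i → P x ∈ L.gr i)
    (hker : ∀ x y, P x = 0 → P y = 0 → P (L.br x y) = 0)
    (habel : ∀ x y, L.br (P x) (P y) = 0)
    (D : G) (hD : D ∈ L.gr 1)
    (n : ℕ) (p : Fin n → ZMod 2) (a : Fin n → G)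
    (ha : ∀ i, a i ∈ L.gr (p i) ∧ P (a i) = a i) :
    jacobiator L P D p a = dbr L P ((1 / 2 : k) • L.br D D) (List.ofFn a) := by
  have hl : ∀ e ∈ List.ofFn (fun i => (a i, p i)), e.1 ∈ L.gr e.2 ∧ P e.1 = e.1 := by
    intro e he
    obtain ⟨i, rfl⟩ := List.mem_ofFn.mp he
    exact ha i
  rw [L.jacobiator_eq_splitJacobiator, L.splitJacobiator_eq hP hPgr hker habel hD hl,
    List.map_ofFn]
  rfl
end
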